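/- Let f : V → ℝ be nonnegative with ‖f‖_w = 1, and let k ≥ 1 be an integer with 2k+1 ≤ n and λ_k > 0 (here λ_k is the k-th smallest eigenvalue of the normalized Laplacian). Then there exists a (2k+1)-step approximation g of f such that ‖f − g‖_w² ≤ 4·R(f)/λ_k. -/

import Mathlib

/-!
Put `c = 2 R(f) / (k λ_k)`, so that `2k · c = 4 R(f) / λ_k`. Starting from `t₀ = 0`, choose each
threshold `t_{j+1} ≥ t_j` so that the tent function of `f` over `[t_j, t_{j+1}]` has
`‖·‖_w² = c`, or `t_{j+1} = max f` if it stays below `c` all the way. If `t_{2k} ≥ max f`, rounding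
`f(v)` to the nearest threshold costs at most the squared height of the tent over the interval
containing `f(v)`, so the error is at most `2k · c`. Otherwise the `2k` tents are disjointly
supported, each of `‖·‖_w² = c`, and their energies sum to at most `R(f)`; so `k` of them have
energy at most `R(f)/(k+1)`, and on their span the Rayleigh quotient is at most
`2R(f)/((k+1)c) < λ_k`, contradicting Courant–Fischer.
If `R(f) = 0`, the same argument applied to the indicators of the level sets of `f` shows that
`f` takes fewer than `k` values, and `f` is its own step approximation.
-/

open scoped Classical

namespace CheegerHigher

noncomputable section

variable {n : ℕ}

/-- Weighted degree of a vertex: `w(v) = ∑_u w(v,u)`. -/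
def deg (w : Fin n → Fin n → ℝ) (v : Fin n) : ℝ := ∑ u, w v u

/-- Volume of a vertex set. -/
def vol (w : Fin n → Fin n → ℝ) (S : Finset (Fin n)) : ℝ := ∑ v ∈ S, deg w v

/-- Total weight of (ordered) pairs from `S` to `T`; for disjoint `S`, `T` this is `w(E(S,T))`. -/
def cutWeight (w : Fin n → Fin n → ℝ) (S T : Finset (Fin n)) : ℝ :=
  ∑ u ∈ S, ∑ v ∈ T, w u v

/-- Total edge weight `w(E)` (each unordered edge counted once). -/
def totalWeight (w : Fin n → Fin n → ℝ) : ℝ := (1 / 2 : ℝ) * ∑ u, ∑ v, w u v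

/-- Conductance of a set `S`. -/
noncomputable def conductance (w : Fin n → Fin n → ℝ) (S : Finset (Fin n)) : ℝ :=
  cutWeight w S Sᶜ / min (vol w S) (vol w Sᶜ)

/-- Conductance of the graph: minimum over nonempty proper subsets. -/
noncomputable def minConductance (w : Fin n → Fin n → ℝ) : ℝ :=
  sInf { x | ∃ S : Finset (Fin n), S.Nonempty ∧ S ≠ Finset.univ ∧ x = conductance w S }

/-- `k`-way expansion: min over `k` pairwise disjoint nonempty subsets of the max conductance. -/
noncomputable def multiwayExpansion (w : Fin n → Fin n → ℝ) (k : ℕ) : ℝ :=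
  sInf { x | ∃ S : Fin k → Finset (Fin n), (∀ i, (S i).Nonempty) ∧
      (∀ i j, i ≠ j → Disjoint (S i) (S j)) ∧ x = ⨆ i, conductance w (S i) }

/-- `‖f‖_w²  = ∑_v w(v) f(v)²`. -/
def normWsq (w : Fin n → Fin n → ℝ) (f : Fin n → ℝ) : ℝ := ∑ v, deg w v * f v ^ 2

/-- Dirichlet energy `∑_{{u,v} ∈ E} w(u,v) (f(u)-f(v))²` (each unordered edge once). -/
def energy (w : Fin n → Fin n → ℝ) (f : Fin n → ℝ) : ℝ :=
  (1 / 2 : ℝ) * ∑ u, ∑ v, w u v * (f u - f v) ^ 2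

/-- Rayleigh quotient of `f`. -/
noncomputable def rayleigh (w : Fin n → Fin n → ℝ) (f : Fin n → ℝ) : ℝ :=
  energy w f / normWsq w f

/-- Signless energy `∑_{{u,v} ∈ E} w(u,v) (f(u)+f(v))²`. -/
def signEnergy (w : Fin n → Fin n → ℝ) (f : Fin n → ℝ) : ℝ :=
  (1 / 2 : ℝ) * ∑ u, ∑ v, w u v * (f u + f v) ^ 2

/-- Signless Rayleigh quotient `R⁺(f)`. -/
noncomputable def rayleighP (w : Fin n → Fin n → ℝ) (f : Fin n → ℝ) : ℝ :=
  signEnergy w f / normWsq w f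

/-- Normalized Laplacian `𝓛 = I - D^{-1/2} A D^{-1/2}`. -/
noncomputable def normLap (w : Fin n → Fin n → ℝ) : Matrix (Fin n) (Fin n) ℝ :=
  Matrix.of fun u v =>
    (if u = v then (1 : ℝ) else 0) - w u v / (Real.sqrt (deg w u) * Real.sqrt (deg w v))

/-- Signless normalized Laplacian `𝓜 = I + D^{-1/2} A D^{-1/2}`. -/
noncomputable def signLap (w : Fin n → Fin n → ℝ) : Matrix (Fin n) (Fin n) ℝ :=
  Matrix.of fun u v =>
    (if u = v then (1 : ℝ) else 0) + w u v / (Real.sqrt (deg w u) * Real.sqrt (deg w v))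

/-- The `k`-th smallest eigenvalue of a Hermitian matrix (1-based index `k`). -/
noncomputable def sortedEig {A : Matrix (Fin n) (Fin n) ℝ} (hA : A.IsHermitian) (k : ℕ) : ℝ :=
  if h : k - 1 < n then hA.eigenvalues (Tuple.sort hA.eigenvalues ⟨k - 1, h⟩) else 0

/-- Threshold set `V_f(t) = {v : f(v) ≥ t}`. -/
noncomputable def thresholdSet (f : Fin n → ℝ) (t : ℝ) : Finset (Fin n) :=
  Finset.univ.filter fun v => t ≤ f v

/-- `φ(f)`: best conductance among threshold sets of `f` that are nonempty and proper. -/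
noncomputable def phiF (w : Fin n → Fin n → ℝ) (f : Fin n → ℝ) : ℝ :=
  sInf { x | ∃ t : ℝ, (thresholdSet f t).Nonempty ∧ thresholdSet f t ≠ Finset.univ ∧
      x = conductance w (thresholdSet f t) }

/-- Support of a function, as a finset. -/
noncomputable def supp (f : Fin n → ℝ) : Finset (Fin n) :=
  Finset.univ.filter fun v => f v ≠ 0

/-- `L_f(t) = {v : f(v) ≤ -t}`. -/
noncomputable def Lset (f : Fin n → ℝ) (t : ℝ) : Finset (Fin n) :=
  Finset.univ.filter fun v => f v ≤ -t

/-- `R_f(t) = {v : f(v) ≥ t}`. -/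
noncomputable def Rset (f : Fin n → ℝ) (t : ℝ) : Finset (Fin n) :=
  Finset.univ.filter fun v => t ≤ f v

/-- Bipartiteness ratio of an induced cut `(L,R)` (for disjoint `L`, `R`). -/
noncomputable def biRatio (w : Fin n → Fin n → ℝ) (L R : Finset (Fin n)) : ℝ :=
  (cutWeight w L L + cutWeight w R R + cutWeight w (L ∪ R) (L ∪ R)ᶜ) / vol w (L ∪ R)

/-- `β(f)`: best bipartiteness ratio among threshold cuts of `f`. -/
noncomputable def betaF (w : Fin n → Fin n → ℝ) (f : Fin n → ℝ) : ℝ :=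
  sInf { x | ∃ t : ℝ, 0 < t ∧ (Lset f t ∪ Rset f t).Nonempty ∧
      x = biRatio w (Lset f t) (Rset f t) }

/-- `β(G)`: minimum bipartiteness ratio over all induced cuts. -/
noncomputable def minBeta (w : Fin n → Fin n → ℝ) : ℝ :=
  sInf { x | ∃ L R : Finset (Fin n), Disjoint L R ∧ (L ∪ R).Nonempty ∧ x = biRatio w L R }

/-- Energy of `f` restricted to the interval `(b,a]`:
`∑_{{u,v} ∈ E} w(u,v) · len((b,a] ∩ [f(u),f(v)])²`. -/
def intervalEnergy (w : Fin n → Fin n → ℝ) (f : Fin n → ℝ) (b a : ℝ) : ℝ :=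
  (1 / 2 : ℝ) * ∑ u, ∑ v,
    w u v * max 0 (min a (max (f u) (f v)) - max b (min (f u) (f v))) ^ 2

/-- The relative distance `dist(x,R) = inf_{y ∈ R} |x-y|/y` from a point to a region. -/
noncomputable def regionDist (x : ℝ) (R : Set ℝ) : ℝ :=
  sInf ((fun y => |x - y| / y) '' R)

/-- `g` is a `(2k+1)`-step approximation of `f`: there are thresholds
`0 = t₀ ≤ t₁ ≤ … ≤ t_{2k}` and `g(v)` is a threshold closest to `f(v)`. -/
def IsStepApprox (f g : Fin n → ℝ) (k : ℕ) : Prop :=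
  ∃ t : Fin (2 * k + 1) → ℝ, t 0 = 0 ∧ Monotone t ∧
    ∀ v, (∃ i, g v = t i) ∧ ∀ i, |f v - g v| ≤ |f v - t i|

/-- `g` is a symmetric `(2k+1)`-step approximation of `f`: there are thresholds
`0 = t₀ ≤ t₁ ≤ … ≤ t_{2k}` and `g(v)` is a value among `{±t_i}` closest to `f(v)`. -/
def IsSymStepApprox (f g : Fin n → ℝ) (k : ℕ) : Prop :=
  ∃ t : Fin (2 * k + 1) → ℝ, t 0 = 0 ∧ Monotone t ∧
    ∀ v, (∃ i, g v = t i ∨ g v = -t i) ∧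
      ∀ i, |f v - g v| ≤ |f v - t i| ∧ |f v - g v| ≤ |f v + t i|

/-- Edge weights of the induced subgraph on `U`. -/
def inducedW (w : Fin n → Fin n → ℝ) (U : Finset (Fin n)) : Fin n → Fin n → ℝ :=
  fun u v => if u ∈ U ∧ v ∈ U then w u v else 0

/-- Uncutness `γ(L,R) = w(E(L)) + w(E(R)) + w(E(L∪R, complement))`. -/
noncomputable def uncut (w : Fin n → Fin n → ℝ) (L R : Finset (Fin n)) : ℝ :=
  (1 / 2 : ℝ) * cutWeight w L L + (1 / 2 : ℝ) * cutWeight w R R +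
    cutWeight w (L ∪ R) (L ∪ R)ᶜ

open Finset
open scoped RealInnerProductSpace

section Tent

def tent (a b x : ℝ) : ℝ := max 0 (min (x - a) (b - x))

lemma tent_eq_zero_of_le_left {a b x : ℝ} (h : x ≤ a) : tent a b x = 0 :=
  max_eq_left ((min_le_left _ _).trans (by linarith))

lemma tent_eq_zero_of_right_le {a b x : ℝ} (h : b ≤ x) : tent a b x = 0 :=
  max_eq_left ((min_le_right _ _).trans (by linarith))

lemma mem_Ioo_of_tent_ne_zero {a b x : ℝ} (h : tent a b x ≠ 0) : x ∈ Set.Ioo a b :=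
  ⟨lt_of_not_ge fun hx => h (tent_eq_zero_of_le_left hx),
    lt_of_not_ge fun hx => h (tent_eq_zero_of_right_le hx)⟩

lemma tent_eq_min {a b x : ℝ} (ha : a ≤ x) (hb : x ≤ b) : tent a b x = min (x - a) (b - x) :=
  max_eq_right (le_min (by linarith) (by linarith))

lemma tent_self (a x : ℝ) : tent a a x = 0 :=
  (le_total x a).elim tent_eq_zero_of_le_left tent_eq_zero_of_right_le

-- The right-hand side is the length of `[x, y] ∩ [a, b]`.
lemma abs_tent_sub_tent_le {a b x y : ℝ} (hab : a ≤ b) (hxy : x ≤ y) :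
    |tent a b x - tent a b y| ≤ max x (min y b) - max x (min y a) := by
  rw [abs_sub_le_iff]
  unfold tent
  constructor <;> (simp only [min_def, max_def]; split_ifs <;> linarith)

variable {t : ℕ → ℝ}

lemma sum_sq_tent_sub_le (ht : Monotone t) (N : ℕ) (x y : ℝ) :
    ∑ j ∈ range N, (tent (t j) (t (j + 1)) x - tent (t j) (t (j + 1)) y) ^ 2 ≤ (x - y) ^ 2 := by
  wlog hxy : x ≤ y generalizing x y
  · simpa only [neg_sub, even_two, Even.neg_pow, sub_sq_comm] using this y x (le_of_not_ge hxy)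
  set m : ℕ → ℝ := fun j => max x (min y (t j))
  have htel : ∑ j ∈ range N, |tent (t j) (t (j + 1)) x - tent (t j) (t (j + 1)) y| ≤ y - x :=
    calc _ ≤ ∑ j ∈ range N, (m (j + 1) - m j) :=
          sum_le_sum fun j _ => abs_tent_sub_tent_le (ht j.le_succ) hxy
      _ = m N - m 0 := sum_range_sub m N
      _ ≤ y - x := by
          have h1 : m N ≤ y := max_le hxy (min_le_left _ _)
          have h2 : x ≤ m 0 := le_max_left _ _
          linarith
  calc _ = ∑ j ∈ range N, |tent (t j) (t (j + 1)) x - tent (t j) (t (j + 1)) y| ^ 2 := by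
        simp only [sq_abs]
    _ ≤ (∑ j ∈ range N, |tent (t j) (t (j + 1)) x - tent (t j) (t (j + 1)) y|) ^ 2 :=
        sum_sq_le_sq_sum_of_nonneg fun j _ => abs_nonneg _
    _ ≤ (x - y) ^ 2 := by
        rw [sub_sq_comm]
        exact pow_le_pow_left₀ (sum_nonneg fun j _ => abs_nonneg _) htel 2

-- The distance from `x` to the nearest threshold is the height of the tent of the threshold
-- interval containing `x`.
lemma exists_sq_sub_le_sum_sq_tent {N : ℕ} {x : ℝ} (h0 : t 0 ≤ x)
    (hN : x ≤ t N) : ∃ i ≤ N, (x - t i) ^ 2 ≤ ∑ j ∈ range N, tent (t j) (t (j + 1)) x ^ 2 := by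
  induction N with
  | zero => exact ⟨0, le_rfl, by simp [le_antisymm hN h0]⟩
  | succ N ih =>
    rw [sum_range_succ]
    rcases le_total x (t N) with hx | hx
    · obtain ⟨i, hi, hle⟩ := ih hx
      exact ⟨i, hi.trans N.le_succ, hle.trans (le_add_of_nonneg_right (sq_nonneg _))⟩
    · have hsq : ∃ i ≤ N + 1, (x - t i) ^ 2 = tent (t N) (t (N + 1)) x ^ 2 := by
        rw [tent_eq_min hx hN]
        rcases le_total (x - t N) (t (N + 1) - x) with h | h
        · exact ⟨N, N.le_succ, by rw [min_eq_left h]⟩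
        · exact ⟨N + 1, le_rfl, by rw [min_eq_right h]; ring⟩
      obtain ⟨i, hi, heq⟩ := hsq
      exact ⟨i, hi, heq.le.trans (le_add_of_nonneg_left
        (sum_nonneg fun j _ => sq_nonneg _))⟩

end Tent

lemma exists_greedy_thresholds (F : ℝ → ℝ → ℝ) (hF : ∀ a, Continuous (F a)) {c : ℝ}
    (hFc : ∀ a, F a a ≤ c) {M : ℝ} (hM : 0 ≤ M) :
    ∃ t : ℕ → ℝ, t 0 = 0 ∧ Monotone t ∧ ∀ i, t i ≤ M ∧ F (t i) (t (i + 1)) ≤ c ∧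
      (t (i + 1) = M ∨ F (t i) (t (i + 1)) = c) := by
  have step : ∀ a, ∃ b, a ≤ M → a ≤ b ∧ b ≤ M ∧ F a b ≤ c ∧ (b = M ∨ F a b = c) := by
    intro a
    by_cases hM' : F a M ≤ c
    · exact ⟨M, fun ha => ⟨ha, le_rfl, hM', Or.inl rfl⟩⟩
    · by_cases ha : a ≤ M
      · obtain ⟨b, hb, hbc⟩ := intermediate_value_Icc ha (hF a).continuousOn
          ⟨hFc a, (lt_of_not_ge hM').le⟩
        exact ⟨b, fun _ => ⟨hb.1, hb.2, hbc.le, Or.inr hbc⟩⟩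
      · exact ⟨a, fun h => absurd h ha⟩
  choose next hnext using step
  have hle : ∀ i, next^[i] 0 ≤ M := by
    intro i
    induction i with
    | zero => exact hM
    | succ i ih => rw [Function.iterate_succ_apply']; exact (hnext _ ih).2.1
  refine ⟨fun i => next^[i] 0, rfl, monotone_nat_of_le_succ fun i => ?_, fun i => ?_⟩
  · rw [Function.iterate_succ_apply']; exact (hnext _ (hle i)).1
  · simp only [Function.iterate_succ_apply']
    exact ⟨hle i, (hnext _ (hle i)).2.2⟩

lemma exists_monotone_enum_of_card_le {s : Finset ℝ} (hs : ∀ x ∈ s, 0 ≤ x) {N : ℕ}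
    (hcard : s.card ≤ N) : ∃ t : ℕ → ℝ, t 0 = 0 ∧ Monotone t ∧ ∀ x ∈ s, ∃ i ≤ N, t i = x := by
  set S := insert 0 s
  set r := S.card
  have hr : 0 < r := card_pos.mpr (insert_nonempty 0 s)
  have hrN : r ≤ N + 1 := (card_insert_le 0 s).trans (by omega)
  set e := S.orderEmbOfFin rfl
  -- the increasing enumeration of `insert 0 s`, padded with its largest element
  refine ⟨fun i => e ⟨min i (r - 1), by omega⟩, ?_, fun i j hij => e.monotone ?_, fun x hx => ?_⟩
  · have hmin : S.min' (insert_nonempty 0 s) = 0 :=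
      le_antisymm (min'_le _ _ (mem_insert_self 0 s))
        (le_min' _ _ _ fun y hy => (mem_insert.mp hy).elim (·.ge) (hs y))
    simpa [e, orderEmbOfFin_zero rfl hr] using hmin
  · exact Fin.mk_le_mk.mpr (min_le_min_right _ hij)
  · obtain ⟨i, hi⟩ : x ∈ Set.range e := by
      rw [range_orderEmbOfFin]; exact mem_insert_of_mem hx
    exact ⟨i, by omega, by rw [← hi]; exact congrArg e (Fin.ext (min_eq_left (by omega)))⟩

lemma exists_subset_card_eq_forall_le_of_sum_le {ι : Type*} {s : Finset ι} {a : ι → ℝ}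
    (ha : ∀ i ∈ s, 0 ≤ a i) {k m : ℕ} (hs : s.card = k + m) {E : ℝ} (hE : ∑ i ∈ s, a i ≤ E) :
    ∃ G ⊆ s, G.card = k ∧ ∀ i ∈ G, a i ≤ E / (m + 1) := by
  have hE0 : 0 ≤ E := (sum_nonneg ha).trans hE
  set B := s.filter fun i => E / (m + 1) < a i
  have hB : B.card ≤ m := by
    by_contra! hB
    have hBne : B.Nonempty := card_pos.mp (by omega)
    have : (B.card : ℝ) * (E / (m + 1)) < ∑ i ∈ B, a i := by
      simpa using sum_lt_sum_of_nonempty hBne fun i hi => (mem_filter.mp hi).2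
    have hBs : ∑ i ∈ B, a i ≤ E :=
      (sum_le_sum_of_subset_of_nonneg (filter_subset _ _)
        fun i hi _ => ha i hi).trans hE
    have : E ≤ (B.card : ℝ) * (E / (m + 1)) := by
      rw [mul_div_assoc', le_div_iff₀ (by positivity), mul_comm]
      exact mul_le_mul_of_nonneg_right (by exact_mod_cast Nat.succ_le_of_lt hB) hE0
    linarith
  have hgood : k ≤ (s.filter fun i => a i ≤ E / (m + 1)).card := by
    have := card_filter_add_card_filter_not (s := s) fun i => a i ≤ E / (m + 1)
    simp only [not_le] at this
    change _ + B.card = _ at this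
    omega
  obtain ⟨G, hGs, hG⟩ := exists_subset_card_eq hgood
  exact ⟨G, hGs.trans (filter_subset _ _), hG,
    fun i hi => (mem_filter.mp (hGs hi)).2⟩

lemma inner_toEuclideanLin_self_eq_sum {A : Matrix (Fin n) (Fin n) ℝ} (hA : A.IsHermitian)
    (y : EuclideanSpace ℝ (Fin n)) :
    ⟪y, Matrix.toEuclideanLin A y⟫ = ∑ i, hA.eigenvalues i * ⟪hA.eigenvectorBasis i, y⟫ ^ 2 := by
  rw [← hA.eigenvectorBasis.sum_inner_mul_inner]
  refine sum_congr rfl fun i _ => ?_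
  have heig : Matrix.toEuclideanLin A (hA.eigenvectorBasis i) =
      hA.eigenvalues i • hA.eigenvectorBasis i := by
    ext v
    simpa using congrFun (hA.mulVec_eigenvectorBasis i) v
  rw [← Matrix.isSymmetric_toEuclideanLin_iff.mpr hA, heig, real_inner_smul_left,
    real_inner_comm]
  ring

theorem sortedEig_le_of_le_finrank {A : Matrix (Fin n) (Fin n) ℝ} (hA : A.IsHermitian) {k : ℕ}
    (hk : 1 ≤ k) (S : Submodule ℝ (EuclideanSpace ℝ (Fin n))) (hS : k ≤ Module.finrank ℝ S)
    {μ : ℝ} (hμ : ∀ y ∈ S, ⟪y, Matrix.toEuclideanLin A y⟫ ≤ μ * ‖y‖ ^ 2) :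
    sortedEig hA k ≤ μ := by
  have hkn : k - 1 < n := by
    have := S.finrank_le; rw [finrank_euclideanSpace_fin] at this; omega
  set σ := Tuple.sort hA.eigenvalues
  set b := hA.eigenvectorBasis
  have hmono : Monotone (hA.eigenvalues ∘ σ) := Tuple.monotone_sort _
  -- By dimension count, some nonzero `y ∈ S` is orthogonal to the eigenvectors of the `k - 1`
  -- smallest eigenvalues.
  let φ : S →ₗ[ℝ] (Fin (k - 1) → ℝ) := LinearMap.pi fun j =>
    (innerₛₗ ℝ (b (σ (Fin.castLE hkn.le j)))).comp S.subtype
  obtain ⟨⟨y, hyS⟩, hyker, hy0⟩ := Submodule.exists_mem_ne_zero_of_ne_bot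
    (LinearMap.ker_ne_bot_of_finrank_lt (f := φ) (by rw [Module.finrank_fin_fun]; omega))
  have hperp : ∀ j : Fin n, (j : ℕ) < k - 1 → ⟪b (σ j), y⟫ = 0 := fun j hj =>
    congrFun (LinearMap.mem_ker.mp hyker) ⟨j, hj⟩
  have hpos : 0 < ‖y‖ ^ 2 := by
    have : y ≠ 0 := fun h => hy0 (by simp [h])
    positivity
  have key : sortedEig hA k * ‖y‖ ^ 2 ≤ ⟪y, Matrix.toEuclideanLin A y⟫ := by
    rw [inner_toEuclideanLin_self_eq_sum hA, ← b.sum_sq_inner_right, mul_sum,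
      ← Equiv.sum_comp σ (fun i => hA.eigenvalues i * ⟪b i, y⟫ ^ 2),
      ← Equiv.sum_comp σ (fun i => sortedEig hA k * ⟪b i, y⟫ ^ 2)]
    refine sum_le_sum fun j _ => ?_
    rcases lt_or_ge (j : ℕ) (k - 1) with hj | hj
    · simp [hperp j hj]
    · rw [sortedEig, dif_pos hkn]
      exact mul_le_mul_of_nonneg_right (hmono (show (⟨k - 1, hkn⟩ : Fin n) ≤ j from hj))
        (sq_nonneg _)
  exact le_of_mul_le_mul_right (key.trans (hμ y hyS)) hpos

section Energy

variable {w : Fin n → Fin n → ℝ}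

lemma energy_nonneg (hnn : ∀ u v, 0 ≤ w u v) (f : Fin n → ℝ) :
    0 ≤ energy w f :=
  mul_nonneg (by norm_num) (sum_nonneg fun u _ => sum_nonneg fun v _ =>
    mul_nonneg (hnn u v) (sq_nonneg _))

lemma energy_comp_eq_zero (hnn : ∀ u v, 0 ≤ w u v) {f : Fin n → ℝ}
    (hf : energy w f = 0) (φ : ℝ → ℝ) : energy w (fun v => φ (f v)) = 0 := by
  have hterm : ∀ u v, 0 ≤ w u v * (f u - f v) ^ 2 := fun u v => by have := hnn u v; positivity
  have hf' : ∑ u, ∑ v, w u v * (f u - f v) ^ 2 = 0 := by simp only [energy] at hf; linarith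
  rw [sum_eq_zero_iff_of_nonneg fun u _ => sum_nonneg fun v _ => hterm u v] at hf'
  simp only [energy]
  refine mul_eq_zero_of_right _ (sum_eq_zero fun u _ => sum_eq_zero fun v _ => ?_)
  have huv := (sum_eq_zero_iff_of_nonneg fun v _ => hterm u v).mp
    (hf' u (mem_univ _)) v (mem_univ _)
  rcases mul_eq_zero.mp huv with h | h
  · simp [h]
  · simp [sub_eq_zero.mp (pow_eq_zero_iff two_ne_zero |>.mp h)]

lemma sum_energy_tent_le (hnn : ∀ u v, 0 ≤ w u v) {t : ℕ → ℝ}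
    (ht : Monotone t) (f : Fin n → ℝ) (N : ℕ) :
    ∑ j ∈ range N, energy w (fun v => tent (t j) (t (j + 1)) (f v)) ≤ energy w f := by
  simp only [energy, ← mul_sum]
  gcongr
  rw [sum_comm]
  gcongr with u
  rw [sum_comm]
  gcongr with v
  rw [← mul_sum]
  exact mul_le_mul_of_nonneg_left (sum_sq_tent_sub_le ht N (f u) (f v)) (hnn u v)

lemma energy_eq_normWsq_sub (hsym : ∀ u v, w u v = w v u) (g : Fin n → ℝ) :
    energy w g = normWsq w g - ∑ u, ∑ v, w u v * (g u * g v) := by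
  have hrow : ∑ u, ∑ v, w u v * g u ^ 2 = normWsq w g := by
    simp [normWsq, deg, sum_mul]
  have hcol : ∑ u, ∑ v, w u v * g v ^ 2 = normWsq w g := by
    rw [sum_comm]; simp_rw [hsym _]; exact hrow
  simp only [energy]
  have : ∀ u v, w u v * (g u - g v) ^ 2 =
      w u v * g u ^ 2 + w u v * g v ^ 2 - 2 * (w u v * (g u * g v)) := fun u v => by ring
  simp only [this, sum_sub_distrib, sum_add_distrib, ← mul_sum, hrow, hcol]
  ring

-- The substitution `y = D^{1/2} g` that turns `R(g)` into the Rayleigh quotient of `𝓛`.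
def sqrtDegMul (w : Fin n → Fin n → ℝ) : (Fin n → ℝ) →ₗ[ℝ] EuclideanSpace ℝ (Fin n) where
  toFun g := WithLp.toLp 2 fun v => √(deg w v) * g v
  map_add' g h := by ext v; simp [mul_add]
  map_smul' c g := by ext v; simp; ring

lemma norm_sqrtDegMul_sq (hdeg : ∀ v, 0 ≤ deg w v) (g : Fin n → ℝ) :
    ‖sqrtDegMul w g‖ ^ 2 = normWsq w g := by
  simp [sqrtDegMul, EuclideanSpace.real_norm_sq_eq, normWsq, mul_pow, Real.sq_sqrt (hdeg _)]

lemma inner_sqrtDegMul_normLap (hsym : ∀ u v, w u v = w v u) (hdeg : ∀ v, 0 < deg w v)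
    (g : Fin n → ℝ) :
    ⟪sqrtDegMul w g, Matrix.toEuclideanLin (normLap w) (sqrtDegMul w g)⟫ = energy w g := by
  have entry : ∀ u v, normLap w u v * (√(deg w v) * g v) * (√(deg w u) * g u) =
      (if u = v then deg w u * g u ^ 2 else 0) - w u v * (g u * g v) := by
    intro u v
    have hu := Real.sqrt_pos.2 (hdeg u)
    have hv := Real.sqrt_pos.2 (hdeg v)
    split_ifs with huv
    · subst huv
      simp [normLap]; field_simp; rw [Real.sq_sqrt (hdeg u).le]; ring
    · simp [normLap, huv]; field_simp
  simp [sqrtDegMul, Matrix.toEuclideanLin, PiLp.inner_apply, Matrix.mulVec, dotProduct,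
    sum_mul, entry, energy_eq_normWsq_sub hsym, normWsq]

lemma exists_isStepApprox_of_forall_exists_le (hdeg : ∀ v, 0 ≤ deg w v) {f : Fin n → ℝ}
    {k : ℕ} {t : ℕ → ℝ} (ht0 : t 0 = 0) (ht : Monotone t) {e : Fin n → ℝ}
    (he : ∀ v, ∃ i ≤ 2 * k, (f v - t i) ^ 2 ≤ e v) :
    ∃ g, IsStepApprox f g k ∧ normWsq w (f - g) ≤ ∑ v, deg w v * e v := by
  choose i hi hie using he
  have hnearest : ∀ v, ∃ j : Fin (2 * k + 1), ∀ l : Fin (2 * k + 1), |f v - t j| ≤ |f v - t l| :=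
    fun v => Finite.exists_min fun j : Fin (2 * k + 1) => |f v - t j|
  choose j hj using hnearest
  refine ⟨fun v => t (j v), ⟨fun l => t l, ht0, fun a b hab => ht hab,
    fun v => ⟨⟨j v, rfl⟩, hj v⟩⟩, sum_le_sum fun v _ => ?_⟩
  refine mul_le_mul_of_nonneg_left (le_trans ?_ (hie v)) (hdeg v)
  exact sq_le_sq.mpr (hj v ⟨i v, by have := hi v; omega⟩)

end Energy

section DisjointSupport

variable {ι : Type*}

lemma support_eval_subsingleton {h : ι → Fin n → ℝ}
    (hdisj : Pairwise fun i j => Disjoint (Function.support (h i)) (Function.support (h j)))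
    (c : ι → ℝ) (v : Fin n) : (Function.support fun i => c i * h i v).Subsingleton := by
  intro i hi j hj
  by_contra hij
  exact Set.disjoint_left.mp (hdisj hij) (right_ne_zero_of_mul hi) (right_ne_zero_of_mul hj)

variable [Fintype ι]

lemma sq_sum_eq_sum_sq_of_subsingleton {x : ι → ℝ} (hx : (Function.support x).Subsingleton) :
    (∑ i, x i) ^ 2 = ∑ i, x i ^ 2 := by
  rcases hx.eq_empty_or_singleton with h | ⟨p, hp⟩
  · simp [Function.support_eq_empty_iff.mp h]
  · have hzero : ∀ i, i ≠ p → x i = 0 := fun i hi =>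
      Function.notMem_support.mp (by simpa [hp] using hi)
    rw [Fintype.sum_eq_single p hzero, Fintype.sum_eq_single p fun i hi => by simp [hzero i hi]]

lemma sq_sum_sub_le_two_mul {x y : ι → ℝ} (hx : (Function.support x).Subsingleton)
    (hy : (Function.support y).Subsingleton) :
    (∑ i, (x i - y i)) ^ 2 ≤ 2 * ∑ i, (x i - y i) ^ 2 := by
  set s := univ.filter fun i => x i ≠ 0 ∨ y i ≠ 0
  have hcard : s.card ≤ 2 := by
    have hs : s = univ.filter (fun i => x i ≠ 0) ∪ univ.filter (fun i => y i ≠ 0) := by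
      ext i; simp [s]
    have h1 : ∀ z : ι → ℝ, (Function.support z).Subsingleton →
        (univ.filter fun i => z i ≠ 0).card ≤ 1 := fun z hz =>
      card_le_one.mpr fun a ha b hb => hz (by simpa using ha) (by simpa using hb)
    rw [hs]
    exact (card_union_le _ _).trans (by linarith [h1 x hx, h1 y hy])
  have hsum : ∑ i ∈ s, (x i - y i) = ∑ i, (x i - y i) :=
    sum_filter_of_ne fun i _ h => by by_contra! h'; simp_all
  calc (∑ i, (x i - y i)) ^ 2 = (∑ i ∈ s, (x i - y i)) ^ 2 := by rw [hsum]
    _ ≤ s.card * ∑ i ∈ s, (x i - y i) ^ 2 := sq_sum_le_card_mul_sum_sq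
    _ ≤ 2 * ∑ i, (x i - y i) ^ 2 := by
      refine mul_le_mul (by exact_mod_cast hcard) ?_ (sum_nonneg fun i _ => sq_nonneg _)
        zero_le_two
      exact sum_le_univ_sum_of_nonneg fun i => sq_nonneg _

variable {w : Fin n → Fin n → ℝ} {h : ι → Fin n → ℝ}

lemma normWsq_sum_smul
    (hdisj : Pairwise fun i j => Disjoint (Function.support (h i)) (Function.support (h j)))
    (c : ι → ℝ) : normWsq w (∑ i, c i • h i) = ∑ i, c i ^ 2 * normWsq w (h i) := by
  simp only [normWsq, Finset.sum_apply, Pi.smul_apply, smul_eq_mul,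
    sq_sum_eq_sum_sq_of_subsingleton (support_eval_subsingleton hdisj c _), mul_sum]
  rw [sum_comm]
  exact sum_congr rfl fun i _ => sum_congr rfl fun v _ => by ring

lemma energy_sum_smul_le (hnn : ∀ u v, 0 ≤ w u v)
    (hdisj : Pairwise fun i j => Disjoint (Function.support (h i)) (Function.support (h j)))
    (c : ι → ℝ) : energy w (∑ i, c i • h i) ≤ 2 * ∑ i, c i ^ 2 * energy w (h i) := by
  have pointwise : ∀ u v, ((∑ i, c i • h i) u - (∑ i, c i • h i) v) ^ 2 ≤
      2 * ∑ i, c i ^ 2 * (h i u - h i v) ^ 2 := fun u v => by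
    simp only [Finset.sum_apply, Pi.smul_apply, smul_eq_mul, ← sum_sub_distrib]
    calc _ ≤ 2 * ∑ i, (c i * h i u - c i * h i v) ^ 2 := sq_sum_sub_le_two_mul
            (support_eval_subsingleton hdisj c u) (support_eval_subsingleton hdisj c v)
      _ = _ := by congr 1; exact sum_congr rfl fun i _ => by ring
  calc energy w (∑ i, c i • h i)
      ≤ 1 / 2 * ∑ u, ∑ v, w u v * (2 * ∑ i, c i ^ 2 * (h i u - h i v) ^ 2) := by
        unfold energy; gcongr with u _ v _
        · exact hnn u v
        · exact pointwise u v
    _ = 2 * ∑ i, c i ^ 2 * energy w (h i) := by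
        simp only [energy, mul_sum]
        conv_rhs => rw [sum_comm]; enter [2, u]; rw [sum_comm]
        exact sum_congr rfl fun u _ => sum_congr rfl fun v _ => sum_congr rfl fun i _ => by ring

theorem sortedEig_le_of_disjoint_support (hsym : ∀ u v, w u v = w v u)
    (hnn : ∀ u v, 0 ≤ w u v) (hdeg : ∀ v, 0 < deg w v) (hH : (normLap w).IsHermitian)
    [Nonempty ι] (hne : ∀ i, h i ≠ 0)
    (hdisj : Pairwise fun i j => Disjoint (Function.support (h i)) (Function.support (h j)))
    {μ : ℝ} (hμ : ∀ i, energy w (h i) ≤ μ * normWsq w (h i)) :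
    sortedEig hH (Fintype.card ι) ≤ 2 * μ := by
  set Φ := sqrtDegMul w ∘ₗ Fintype.linearCombination ℝ h
  have hΦ : ∀ c, Φ c = sqrtDegMul w (∑ i, c i • h i) := fun c => by
    simp [Φ, Fintype.linearCombination_apply]
  have hinj : Function.Injective Φ := by
    rw [← LinearMap.ker_eq_bot, LinearMap.ker_eq_bot']
    intro c hc
    funext i
    obtain ⟨v, hv : h i v ≠ 0⟩ := Function.ne_iff.mp (hne i)
    have hcv : ∑ j, c j * (√(deg w v) * h j v) = 0 := by
      simpa [hΦ, sqrtDegMul] using congrArg (fun y : EuclideanSpace ℝ (Fin n) => y v) hc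
    rw [Fintype.sum_eq_single i fun j hj => ?_] at hcv
    · simpa [(Real.sqrt_pos.2 (hdeg v)).ne', hv] using hcv
    · by_contra hj0
      exact Set.disjoint_left.mp (hdisj hj) (right_ne_zero_of_mul (right_ne_zero_of_mul hj0)) hv
  refine sortedEig_le_of_le_finrank hH Fintype.card_pos (LinearMap.range Φ)
    (by rw [LinearMap.finrank_range_of_inj hinj, Module.finrank_fintype_fun_eq_card]) ?_
  rintro _ ⟨c, rfl⟩
  rw [hΦ, inner_sqrtDegMul_normLap hsym hdeg, norm_sqrtDegMul_sq (fun v => (hdeg v).le),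
    normWsq_sum_smul hdisj]
  calc energy w (∑ i, c i • h i) ≤ 2 * ∑ i, c i ^ 2 * energy w (h i) :=
        energy_sum_smul_le hnn hdisj c
    _ ≤ 2 * ∑ i, c i ^ 2 * (μ * normWsq w (h i)) := by
        gcongr with i; exact hμ i
    _ = 2 * μ * ∑ i, c i ^ 2 * normWsq w (h i) := by
        rw [mul_assoc, mul_sum, mul_sum, mul_sum]
        exact sum_congr rfl fun i _ => by ring

end DisjointSupport

section StepApproximation

variable {w : Fin n → Fin n → ℝ} {f : Fin n → ℝ} {k : ℕ}

-- The indicators of the level sets of a zero-energy function have zero energy.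
lemma card_image_lt_of_energy_eq_zero (hsym : ∀ u v, w u v = w v u)
    (hnn : ∀ u v, 0 ≤ w u v) (hdeg : ∀ v, 0 < deg w v) (hH : (normLap w).IsHermitian)
    (hk : 1 ≤ k) (hf : energy w f = 0) (hlk : 0 < sortedEig hH k) : (univ.image f).card < k := by
  by_contra! hcard
  obtain ⟨G, hGf, hG⟩ := exists_subset_card_eq hcard
  have : Nonempty G := Finset.Nonempty.coe_sort (card_pos.mp (by omega))
  let h : G → Fin n → ℝ := fun a v => if f v = a then 1 else 0
  have hle := sortedEig_le_of_disjoint_support hsym hnn hdeg hH (h := h) (μ := 0) ?_ ?_ ?_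
  · rw [Fintype.card_coe, hG] at hle; linarith
  · intro a ha
    obtain ⟨v, -, hv⟩ := mem_image.mp (hGf a.2)
    simpa [h, hv] using congrFun ha v
  · intro a b hab
    refine Set.disjoint_left.mpr fun v hva hvb => hab (Subtype.ext ?_)
    simp only [Function.mem_support, h, ne_eq, ite_eq_right_iff, one_ne_zero, imp_false,
      not_not] at hva hvb
    rw [← hva, ← hvb]
  · intro a
    rw [zero_mul, energy_comp_eq_zero hnn hf fun x => if x = a then 1 else 0]

lemma sortedEig_le_of_tents (hsym : ∀ u v, w u v = w v u) (hnn : ∀ u v, 0 ≤ w u v)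
    (hdeg : ∀ v, 0 < deg w v) (hH : (normLap w).IsHermitian) (hk : 1 ≤ k) {t : ℕ → ℝ}
    (ht : Monotone t) {c : ℝ} (hc : 0 < c)
    (htc : ∀ j < 2 * k, normWsq w (fun v => tent (t j) (t (j + 1)) (f v)) = c) :
    sortedEig hH k ≤ 2 * (energy w f / ((k + 1) * c)) := by
  let h : ℕ → Fin n → ℝ := fun j v => tent (t j) (t (j + 1)) (f v)
  obtain ⟨G, hG2k, hG, hGE⟩ := exists_subset_card_eq_forall_le_of_sum_le
    (s := range (2 * k)) (a := fun j => energy w (h j)) (k := k) (m := k)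
    (fun j _ => energy_nonneg hnn _) (by simp; ring) (sum_energy_tent_le hnn ht f (2 * k))
  have : Nonempty G := Finset.Nonempty.coe_sort (card_pos.mp (by omega))
  have hGc : ∀ j : G, normWsq w (h j) = c := fun j =>
    htc j (mem_range.mp (hG2k j.2))
  have hle := sortedEig_le_of_disjoint_support hsym hnn hdeg hH (h := fun j : G => h j)
    (μ := energy w f / ((k + 1) * c)) ?_ ?_ ?_
  · rwa [Fintype.card_coe, hG] at hle
  · intro j hj
    have := hGc j
    simp [hj, normWsq] at this
    linarith
  · intro i j hij
    refine Set.disjoint_left.mpr fun v hvi hvj => ?_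
    have hi := mem_Ioo_of_tent_ne_zero hvi
    have hj := mem_Ioo_of_tent_ne_zero hvj
    rcases lt_or_gt_of_ne (Subtype.coe_ne_coe.mpr hij) with hlt | hlt
    · linarith [ht (Nat.succ_le_of_lt hlt), hi.2, hj.1]
    · linarith [ht (Nat.succ_le_of_lt hlt), hi.1, hj.2]
  · intro j
    rw [hGc j, div_mul_eq_div_div, div_mul_cancel₀ _ hc.ne']
    exact hGE j j.2

lemma exists_step_approximation_of_energy_eq_zero (hsym : ∀ u v, w u v = w v u)
    (hnn : ∀ u v, 0 ≤ w u v) (hdeg : ∀ v, 0 < deg w v) (hH : (normLap w).IsHermitian)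
    (hfnn : ∀ v, 0 ≤ f v) (hk : 1 ≤ k) (hf : energy w f = 0) (hlk : 0 < sortedEig hH k) :
    ∃ g, IsStepApprox f g k ∧ normWsq w (f - g) ≤ 0 := by
  obtain ⟨t, ht0, ht, hft⟩ := exists_monotone_enum_of_card_le (s := univ.image f)
    (by simpa using hfnn) ((card_image_lt_of_energy_eq_zero hsym hnn hdeg hH hk hf hlk).le.trans
      (by omega : k ≤ 2 * k))
  have hexact : ∀ v, ∃ i ≤ 2 * k, (f v - t i) ^ 2 ≤ 0 := fun v => by
    obtain ⟨i, hi, hti⟩ := hft (f v) (mem_image_of_mem f (mem_univ v))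
    exact ⟨i, hi, by simp [hti]⟩
  simpa using exists_isStepApprox_of_forall_exists_le (w := w) (fun v => (hdeg v).le) ht0 ht hexact

lemma exists_step_approximation_of_energy_pos (hsym : ∀ u v, w u v = w v u)
    (hnn : ∀ u v, 0 ≤ w u v) (hdeg : ∀ v, 0 < deg w v) (hH : (normLap w).IsHermitian)
    (hfnn : ∀ v, 0 ≤ f v) (hk : 1 ≤ k) (hf : 0 < energy w f) (hlk : 0 < sortedEig hH k) :
    ∃ g, IsStepApprox f g k ∧ normWsq w (f - g) ≤ 4 * energy w f / sortedEig hH k := by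
  set lam := sortedEig hH k
  set c := 2 * energy w f / (k * lam)
  have hk' : (0 : ℝ) < k := by exact_mod_cast hk
  have hc : 0 < c := by positivity
  obtain ⟨t, ht0, ht, htM⟩ := exists_greedy_thresholds
    (fun a b => normWsq w fun v => tent a b (f v)) (fun a => by unfold normWsq tent; fun_prop)
    (c := c) (fun a => by simp [tent_self, normWsq, hc.le]) (M := ∑ v, f v)
    (sum_nonneg fun v _ => hfnn v)
  by_cases hcov : ∀ v, f v ≤ t (2 * k)
  · obtain ⟨g, hg, hfg⟩ := exists_isStepApprox_of_forall_exists_le (fun v => (hdeg v).le) ht0 ht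
      fun v => exists_sq_sub_le_sum_sq_tent (ht0.symm ▸ hfnn v) (hcov v)
    refine ⟨g, hg, hfg.trans ?_⟩
    calc ∑ v, deg w v * ∑ j ∈ range (2 * k), tent (t j) (t (j + 1)) (f v) ^ 2
        = ∑ j ∈ range (2 * k), normWsq w fun v => tent (t j) (t (j + 1)) (f v) := by
          simp only [normWsq, mul_sum]; exact sum_comm
      _ ≤ ∑ j ∈ range (2 * k), c := sum_le_sum fun j _ => (htM j).2.1
      _ = 4 * energy w f / lam := by simp [c]; field_simp; ring
  · obtain ⟨v₀, hv₀⟩ : ∃ v, t (2 * k) < f v := by simpa using hcov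
    have htc : ∀ j < 2 * k, (normWsq w fun v => tent (t j) (t (j + 1)) (f v)) = c :=
      fun j hj => (htM j).2.2.resolve_left fun hM => by
        linarith [ht (show j + 1 ≤ 2 * k by omega), single_le_sum (fun v _ => hfnn v)
          (mem_univ v₀)]
    have hle := sortedEig_le_of_tents hsym hnn hdeg hH hk ht hc htc
    have : 2 * (energy w f / ((k + 1) * c)) = k * lam / (k + 1) := by
      simp only [c]; field_simp
    rw [this, le_div_iff₀ (by positivity)] at hle
    linarith

end StepApproximation

theorem exists_step_approximation_general
    (w : Fin n → Fin n → ℝ)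
    (hsym : ∀ u v, w u v = w v u) (hnn : ∀ u v, 0 ≤ w u v)
    (hdeg : ∀ v, 1 ≤ deg w v)
    (hH : (normLap w).IsHermitian)
    (f : Fin n → ℝ) (hfnn : ∀ v, 0 ≤ f v) (hfnorm : normWsq w f = 1)
    (k : ℕ) (hk1 : 1 ≤ k) (hlk : 0 < sortedEig hH k) :
    ∃ g : Fin n → ℝ, IsStepApprox f g k ∧
      normWsq w (f - g) ≤ 4 * rayleigh w f / sortedEig hH k := by
  have hdeg' : ∀ v, 0 < deg w v := fun v => one_pos.trans_le (hdeg v)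
  rw [rayleigh, hfnorm, div_one]
  rcases (energy_nonneg hnn f).eq_or_lt with hf | hf
  · rw [← hf, mul_zero, zero_div]
    exact exists_step_approximation_of_energy_eq_zero hsym hnn hdeg' hH hfnn hk1 hf.symm hlk
  · exact exists_step_approximation_of_energy_pos hsym hnn hdeg' hH hfnn hk1 hf hlk

/-- There is a `(2k+1)`-step approximation `g` of `f` with
`‖f-g‖_w² ≤ 4·R(f)/λ_k`. -/
theorem exists_step_approximation
    (hn : 2 ≤ n) (w : Fin n → Fin n → ℝ)
    (hsym : ∀ u v, w u v = w v u) (hnn : ∀ u v, 0 ≤ w u v)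
    (hloop : ∀ v, w v v = 0) (hdeg : ∀ v, 1 ≤ deg w v)
    (hH : (normLap w).IsHermitian)
    (f : Fin n → ℝ) (hfnn : ∀ v, 0 ≤ f v) (hfnorm : normWsq w f = 1)
    (k : ℕ) (hk1 : 1 ≤ k) (hkn : 2 * k + 1 ≤ n) (hlk : 0 < sortedEig hH k) :
    ∃ g : Fin n → ℝ, IsStepApprox f g k ∧
      normWsq w (f - g) ≤ 4 * rayleigh w f / sortedEig hH k :=
  exists_step_approximation_general w hsym hnn hdeg hH f hfnn hfnorm k hk1 hlk

end

end CheegerHigher
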